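/- arXiv:2605.08053 — 2 statements merged into one kernel-verified Lean document; each statement's English description precedes it below -/
import Mathlib

section
/- Let n be a positive integer and let F : (0,∞)^n → (0,∞)^n be defined componentwise by F(x)_i = c_i Σ_j P_{ij} m_j(x)^γ, where c_i > 0, P is a row-stochastic matrix, γ ∈ [0,1), and each m_j(x) is a minimum of finitely many coordinates of x. Then F is a γ-contraction with respect to the sup-log (Thompson) metric d(x,y) = ‖ln x − ln y‖_∞, i.e., d(F(x), F(y)) ≤ γ d(x,y) for all x, y ∈ (0,∞)^n. -/
open Finset

theorem power_law_operator_sup_log_contraction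
    (n : ℕ) (hn : 0 < n) (γ : ℝ) (hγ0 : 0 ≤ γ) (hγ1 : γ < 1)
    (c : Fin n → ℝ) (hc : ∀ i, 0 < c i)
    (P : Fin n → Fin n → ℝ) (hP0 : ∀ i j, 0 ≤ P i j)
    (hP1 : ∀ i, ∑ j, P i j = 1)
    (S : Fin n → Finset (Fin n)) (hS : ∀ j, (S j).Nonempty)
    (F : (Fin n → ℝ) → Fin n → ℝ)
    (hF : ∀ x i, F x i = c i * ∑ j, P i j * ((S j).inf' (hS j) x) ^ γ)
    (hne : (Finset.univ : Finset (Fin n)).Nonempty)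
    (x y : Fin n → ℝ) (hx : ∀ i, 0 < x i) (hy : ∀ i, 0 < y i) :
    Finset.univ.sup' hne (fun i => |Real.log (F x i) - Real.log (F y i)|)
      ≤ γ * Finset.univ.sup' hne (fun i => |Real.log (x i) - Real.log (y i)|) := by
  set D := Finset.univ.sup' hne (fun i => |Real.log (x i) - Real.log (y i)|) with hDdef
  obtain ⟨i₀, _⟩ := hne
  have hD0 : 0 ≤ D := le_trans (abs_nonneg _)
    (Finset.le_sup' (fun i => |Real.log (x i) - Real.log (y i)|) (Finset.mem_univ i₀))
  -- positivity of F on positive vectors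
  have hFpos : ∀ (u : Fin n → ℝ), (∀ k, 0 < u k) → ∀ i, 0 < F u i := by
    intro u hu i
    rw [hF]
    have hm : ∀ j, 0 < (S j).inf' (hS j) u :=
      fun j => (Finset.lt_inf'_iff _).2 fun k _ => hu k
    refine mul_pos (hc i) ?_
    have hterm : ∀ j ∈ Finset.univ, 0 ≤ P i j * ((S j).inf' (hS j) u) ^ γ :=
      fun j _ => mul_nonneg (hP0 i j) (Real.rpow_nonneg (hm j).le γ)
    obtain ⟨j₀, hj₀⟩ : ∃ j, P i j ≠ 0 := by
      by_contra h
      push_neg at h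
      have := hP1 i
      simp [h] at this
    refine Finset.sum_pos' hterm ⟨j₀, Finset.mem_univ j₀, ?_⟩
    exact mul_pos (lt_of_le_of_ne (hP0 i j₀) (Ne.symm hj₀))
      (Real.rpow_pos_of_pos (hm j₀) γ)
  -- main one-sided estimate
  have main : ∀ u v : Fin n → ℝ, (∀ k, 0 < u k) → (∀ k, 0 < v k) →
      (∀ k, u k ≤ Real.exp D * v k) → ∀ i,
      Real.log (F u i) - Real.log (F v i) ≤ γ * D := by
    intro u v hu hv hle i
    have hmu : ∀ j, 0 < (S j).inf' (hS j) u :=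
      fun j => (Finset.lt_inf'_iff _).2 fun k _ => hu k
    have hmv : ∀ j, 0 < (S j).inf' (hS j) v :=
      fun j => (Finset.lt_inf'_iff _).2 fun k _ => hv k
    have hmle : ∀ j, (S j).inf' (hS j) u ≤ Real.exp D * (S j).inf' (hS j) v := by
      intro j
      obtain ⟨k, hk, hvk⟩ := Finset.exists_mem_eq_inf' (hS j) v
      calc (S j).inf' (hS j) u ≤ u k := Finset.inf'_le _ hk
        _ ≤ Real.exp D * v k := hle k
        _ = Real.exp D * (S j).inf' (hS j) v := by rw [hvk]
    have hpow : ∀ j, ((S j).inf' (hS j) u) ^ γ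
        ≤ Real.exp (γ * D) * ((S j).inf' (hS j) v) ^ γ := by
      intro j
      have h1 : ((S j).inf' (hS j) u) ^ γ ≤ (Real.exp D * (S j).inf' (hS j) v) ^ γ :=
        Real.rpow_le_rpow (hmu j).le (hmle j) hγ0
      rwa [Real.mul_rpow (Real.exp_pos D).le (hmv j).le,
        ← Real.exp_log (Real.exp_pos D), Real.log_exp,
        ← Real.exp_mul, mul_comm D γ] at h1
    have hFle : F u i ≤ Real.exp (γ * D) * F v i := by
      rw [hF, hF, mul_left_comm]
      refine mul_le_mul_of_nonneg_left ?_ (hc i).le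
      rw [Finset.mul_sum]
      refine Finset.sum_le_sum fun j _ => ?_
      rw [mul_left_comm]
      exact mul_le_mul_of_nonneg_left (hpow j) (hP0 i j)
    have := Real.log_le_log (hFpos u hu i) hFle
    rw [Real.log_mul (Real.exp_pos _).ne' (hFpos v hv i).ne', Real.log_exp] at this
    linarith
  -- precondition in both directions
  have hub : ∀ (u v : Fin n → ℝ), (∀ k, 0 < u k) → (∀ k, 0 < v k) →
      (∀ k, Real.log (u k) - Real.log (v k) ≤ D) → ∀ k, u k ≤ Real.exp D * v k := by
    intro u v hu hv h k
    have : u k = Real.exp (Real.log (u k)) := (Real.exp_log (hu k)).symm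
    rw [this, ← Real.exp_log (hv k), ← Real.exp_add]
    exact Real.exp_le_exp.2 (by linarith [h k])
  have hxy : ∀ k, Real.log (x k) - Real.log (y k) ≤ D := fun k =>
    le_trans (le_abs_self _)
      (Finset.le_sup' (fun i => |Real.log (x i) - Real.log (y i)|) (Finset.mem_univ k))
  have hyx : ∀ k, Real.log (y k) - Real.log (x k) ≤ D := fun k =>
    le_trans (neg_le_abs _ |>.trans_eq' (by ring))
      (Finset.le_sup' (fun i => |Real.log (x i) - Real.log (y i)|) (Finset.mem_univ k))
  refine Finset.sup'_le _ _ fun i _ => abs_sub_le_iff.2 ⟨?_, ?_⟩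
  · exact main x y hx hy (hub x y hx hy hxy) i
  · exact main y x hy hx (hub y x hy hx hyx) i
end

section
/- Let γ ∈ (0,1) and 0 < ȳ. Define C₁ = (ȳ − ȳ^γ)/(ȳ − 1) if ȳ ≠ 1 and C₁ = 1 − γ if ȳ = 1. Then for every y ≥ ȳ one has (y − 1)(y^γ − y) ≤ −C₁ (y − 1)². -/
/-!
The secant slope `h(y) = (y - y ^ γ) / (y - 1)` of the convex function `y ↦ y - y ^ γ` through
the point `(1, 0)`, completed by its derivative `1 - γ` at `y = 1`, is nondecreasing on `[0, ∞)`.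
Hence `C₁ = h(ȳ) ≤ h(y)` for `y ≥ ȳ`, and `(y - 1)(y ^ γ - y) = -h(y)(y - 1)² ≤ -C₁(y - 1)²`.
-/

open Set

lemma convexOn_sub_rpow {γ : ℝ} (hγ0 : 0 ≤ γ) (hγ1 : γ ≤ 1) :
    ConvexOn ℝ (Ici 0) (fun y : ℝ => y - y ^ γ) :=
  (convexOn_id (convex_Ici 0)).sub (Real.concaveOn_rpow hγ0 hγ1)

lemma one_sub_mul_sub_one_le_sub_rpow {γ y : ℝ} (hγ0 : 0 ≤ γ) (hγ1 : γ ≤ 1) (hy : 0 ≤ y) :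
    (1 - γ) * (y - 1) ≤ y - y ^ γ := by
  have bernoulli := rpow_one_add_le_one_add_mul_self (s := y - 1) (by linarith) hγ0 hγ1
  rw [add_sub_cancel] at bernoulli
  linarith

noncomputable def rpowSlope (γ y : ℝ) : ℝ :=
  if y = 1 then 1 - γ else (y - y ^ γ) / (y - 1)

lemma sub_one_mul_rpow_sub_self (γ y : ℝ) :
    (y - 1) * (y ^ γ - y) = -rpowSlope γ y * (y - 1) ^ 2 := by
  unfold rpowSlope
  split_ifs with hy
  · simp [hy]
  · field_simp [sub_ne_zero.2 hy]
    ring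

lemma monotoneOn_rpowSlope {γ : ℝ} (hγ0 : 0 ≤ γ) (hγ1 : γ ≤ 1) :
    MonotoneOn (rpowSlope γ) (Ici 0) := by
  intro a ha b hb hab
  rcases hab.eq_or_lt with rfl | hab
  · rfl
  unfold rpowSlope
  split_ifs with ha1 hb1 hb1
  · subst ha1; subst hb1; rfl
  · rw [le_div_iff₀ (by linarith [ha1 ▸ hab])]
    exact one_sub_mul_sub_one_le_sub_rpow hγ0 hγ1 hb
  · rw [div_le_iff_of_neg (by linarith [hb1 ▸ hab])]
    exact one_sub_mul_sub_one_le_sub_rpow hγ0 hγ1 ha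
  · simpa using (convexOn_sub_rpow hγ0 hγ1).secant_mono (a := 1) (mem_Ici.2 zero_le_one)
      ha hb ha1 hb1 hab.le

theorem power_law_negative_drift
    (γ : ℝ) (hγ0 : 0 < γ) (hγ1 : γ < 1)
    (ybar : ℝ) (hybar : 0 < ybar)
    (C₁ : ℝ)
    (hC₁ : C₁ = if ybar = 1 then 1 - γ else (ybar - ybar ^ γ) / (ybar - 1)) :
    ∀ y : ℝ, ybar ≤ y → (y - 1) * (y ^ γ - y) ≤ -C₁ * (y - 1) ^ 2 := by
  intro y hy
  have hslope : C₁ ≤ rpowSlope γ y :=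
    hC₁ ▸ monotoneOn_rpowSlope hγ0.le hγ1.le (mem_Ici.2 hybar.le)
      (mem_Ici.2 (hybar.le.trans hy)) hy
  rw [sub_one_mul_rpow_sub_self]
  exact mul_le_mul_of_nonneg_right (neg_le_neg hslope) (sq_nonneg _)
end
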